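/- For n ≥ 2 and k ≥ 1, the set of non-smooth signed permutations u of {1,...,n} with exactly k type B descents is in bijection with the set of pairs (x, v) where x ∈ {1,...,n} and v is a signed permutation of {1,...,n−1} with exactly k−1 strictly positive descents. Consequently, the number of non-smooth signed permutations of {1,...,n} with k type B descents equals n·2^{n−1}·A(n−1,k−1). -/

import Mathlib

/-- A signed permutation of `{1,...,n}` in window notation: `u i` for `i ∈ {1,...,n}`
is the `i`-th letter, with absolute values forming a permutation of `{1,...,n}`;
`u` is `0` outside `{1,...,n}`. -/
def IsSignedPerm (n : ℕ) (u : ℕ → ℤ) : Prop :=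
  (∀ i ∈ Finset.Icc 1 n, 1 ≤ |u i| ∧ |u i| ≤ (n : ℤ)) ∧
  (∀ i ∈ Finset.Icc 1 n, ∀ j ∈ Finset.Icc 1 n, |u i| = |u j| → i = j) ∧
  (∀ i, i ∉ Finset.Icc 1 n → u i = 0)

/-- An (ordinary) permutation of `{1,...,n}`, as a signed permutation with all letters positive. -/
def IsPermWord (n : ℕ) (w : ℕ → ℤ) : Prop :=
  IsSignedPerm n w ∧ ∀ i ∈ Finset.Icc 1 n, 0 < w i

/-- Number of (type A, i.e. strictly positive) descents: indices `i ∈ {1,...,n-1}` with `u i > u (i+1)`. -/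
def descA (n : ℕ) (u : ℕ → ℤ) : ℕ :=
  ((Finset.Icc 1 (n - 1)).filter (fun i => u (i + 1) < u i)).card

/-- Number of type B descents: indices `i ∈ {0,...,n-1}` with `u i > u (i+1)`, where `u 0 = 0`. -/
def descB (n : ℕ) (u : ℕ → ℤ) : ℕ :=
  ((Finset.range n).filter (fun i => u (i + 1) < u i)).card

/-- Number of type D descents: indices `i ∈ {0,...,n-1}` with `u i > u (i+1)`, where `u_0 := -u_2`. -/
def descD (n : ℕ) (u : ℕ → ℤ) : ℕ :=
  ((Finset.range n).filter (fun i => u (i + 1) < (if i = 0 then -(u 2) else u i))).card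

/-- A signed permutation is even-signed if it has an even number of negative letters. -/
def IsEvenSigned (n : ℕ) (u : ℕ → ℤ) : Prop :=
  Even ((Finset.Icc 1 n).filter (fun i => u i < 0)).card

/-- Type A Eulerian number `A(n,k)`. -/
noncomputable def eulA (n k : ℕ) : ℕ := {w : ℕ → ℤ | IsPermWord n w ∧ descA n w = k}.ncard

/-- Type B Eulerian number `B(n,k)`. -/
noncomputable def eulB (n k : ℕ) : ℕ := {u : ℕ → ℤ | IsSignedPerm n u ∧ descB n u = k}.ncard

/-- Type D Eulerian number `D(n,k)`. -/
noncomputable def eulD (n k : ℕ) : ℕ :=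
  {u : ℕ → ℤ | IsSignedPerm n u ∧ IsEvenSigned n u ∧ descD n u = k}.ncard

/-- The unique order-preserving bijection `{±1,...,±n} ∖ {x,−x} → {±1,...,±(n−1)}`
(for `1 ≤ x ≤ n`), applied letterwise. -/
def renorm (x y : ℤ) : ℤ := if x < y then y - 1 else if y < -x then y + 1 else y

/-- The map `u ↦ (|u_1|, u')`, where `u'` is obtained from `u_2 ⋯ u_n` by
order-preservingly renormalizing absolute values into `{1,...,n−1}`. -/
def chi (n : ℕ) (u : ℕ → ℤ) : ℕ × (ℕ → ℤ) :=
  ((u 1).natAbs, fun i => if 1 ≤ i ∧ i ≤ n - 1 then renorm |u 1| (u (i + 1)) else 0)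


lemma descB_split {n : ℕ} (hn : 2 ≤ n) (u v : ℕ → ℤ) (hu0 : u 0 = 0)
    (hs : u 1 * u 2 < 0)
    (hmono : ∀ i ∈ Finset.Icc 1 (n - 2), (v (i + 1) < v i ↔ u (i + 2) < u (i + 1))) :
    descB n u = 1 + descA (n - 1) v := by
  have hrange : Finset.range n = insert 0 (insert 1 (Finset.Ico 2 n)) := by
    ext i; simp [Finset.mem_range, Finset.mem_Ico]; omega
  have htail : ((Finset.Ico 2 n).filter (fun i => u (i + 1) < u i)).card
      = descA (n - 1) v := by
    unfold descA
    rw [eq_comm]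
    apply Finset.card_nbij' (fun i => i + 1) (fun j => j - 1)
    · intro a ha
      simp only [Finset.mem_coe, Finset.mem_filter, Finset.mem_Icc] at ha ⊢
      simp only [Finset.mem_Ico]
      have h2 : a + 1 + 1 = a + 2 := by omega
      have := (hmono a (Finset.mem_Icc.mpr (by omega))).1
      constructor
      · omega
      · rw [h2]; exact this ha.2
    · intro j hj
      simp only [Finset.mem_coe, Finset.mem_filter, Finset.mem_Ico] at hj
      simp only [Finset.mem_coe, Finset.mem_filter, Finset.mem_Icc]
      have h1 : j - 1 + 1 = j := by omega
      have h2 : j - 1 + 2 = j + 1 := by omega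
      refine ⟨by omega, ?_⟩
      rw [(hmono (j - 1) (Finset.mem_Icc.mpr (by omega))), h1, h2]
      exact hj.2
    · intro a ha; dsimp only; omega
    · intro j hj
      simp only [Finset.mem_coe, Finset.mem_filter, Finset.mem_Ico] at hj ⊢; omega
  have e1 : u (0 + 1) = u 1 := by norm_num
  have e2 : u (1 + 1) = u 2 := by norm_num
  unfold descB
  rw [hrange]
  rw [Finset.filter_insert, Finset.filter_insert]
  rcases mul_neg_iff.mp hs with ⟨h1, h2⟩ | ⟨h1, h2⟩
  · rw [if_neg (by rw [e1, hu0]; omega), if_pos (by rw [e2]; omega)]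
    rw [Finset.card_insert_of_notMem (by simp [Finset.mem_filter, Finset.mem_Ico])]
    omega
  · rw [if_pos (by rw [e1, hu0]; omega), if_neg (by rw [e2]; omega)]
    rw [Finset.card_insert_of_notMem (by simp [Finset.mem_filter, Finset.mem_insert, Finset.mem_Ico])]
    omega


def unrenorm (x y : ℤ) : ℤ := if x ≤ y then y + 1 else if y ≤ -x then y - 1 else y

lemma renorm_lt_iff {x y y' : ℤ} (hx : 1 ≤ x) (h1 : y ≠ x) (h2 : y ≠ -x)
    (h3 : y' ≠ x) (h4 : y' ≠ -x) (h5 : y ≠ y') : (renorm x y < renorm x y' ↔ y < y') := by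
  unfold renorm; split_ifs <;> omega

lemma renorm_inj {x y y' : ℤ} (hx : 1 ≤ x) (h1 : y ≠ x) (h2 : y ≠ -x)
    (h3 : y' ≠ x) (h4 : y' ≠ -x) (h : renorm x y = renorm x y') : y = y' := by
  unfold renorm at h; split_ifs at h <;> omega

lemma renorm_natAbs {n : ℕ} {x y : ℤ} (hx : 1 ≤ x) (hxn : x ≤ (n : ℤ))
    (h1 : 1 ≤ y.natAbs) (h2 : y.natAbs ≤ n) (h3 : y ≠ x) (h4 : y ≠ -x) :
    1 ≤ (renorm x y).natAbs ∧ (renorm x y).natAbs ≤ n - 1 := by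
  unfold renorm; split_ifs <;> omega

lemma renorm_natAbs_inj {x y y' : ℤ} (hx : 1 ≤ x) (h1 : y ≠ x) (h2 : y ≠ -x)
    (h3 : y' ≠ x) (h4 : y' ≠ -x) (h : (renorm x y).natAbs = (renorm x y').natAbs) :
    y.natAbs = y'.natAbs := by
  unfold renorm at h; split_ifs at h <;> omega

lemma renorm_unrenorm {x y : ℤ} (hx : 1 ≤ x) : renorm x (unrenorm x y) = y := by
  unfold renorm unrenorm; split_ifs <;> omega

lemma unrenorm_natAbs {n : ℕ} {x y : ℤ} (hx : 1 ≤ x) (hxn : x ≤ (n : ℤ))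
    (h1 : 1 ≤ y.natAbs) (h2 : y.natAbs ≤ n - 1) :
    1 ≤ (unrenorm x y).natAbs ∧ (unrenorm x y).natAbs ≤ n ∧ unrenorm x y ≠ x ∧
      unrenorm x y ≠ -x ∧ (0 < y ↔ 0 < unrenorm x y) := by
  unfold unrenorm; split_ifs <;> omega

lemma unrenorm_natAbs_inj {x y y' : ℤ} (hx : 1 ≤ x)
    (h : (unrenorm x y).natAbs = (unrenorm x y').natAbs) : y.natAbs = y'.natAbs := by
  unfold unrenorm at h; split_ifs at h <;> omega


lemma habs (y : ℤ) : |y| = (y.natAbs : ℤ) := Int.abs_eq_natAbs y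

section chispec

variable {n : ℕ} {u : ℕ → ℤ}

lemma chi_spec (hn : 2 ≤ n) (hu : IsSignedPerm n u) (hs : u 1 * u 2 < 0) :
    (chi n u).1 ∈ Finset.Icc 1 n ∧ IsSignedPerm (n - 1) (chi n u).2 ∧
      descB n u = 1 + descA (n - 1) (chi n u).2 := by
  obtain ⟨hb, hinj, hz⟩ := hu
  have h1n : (1 : ℕ) ∈ Finset.Icc 1 n := by simp [Finset.mem_Icc]; omega
  have hx0 : 1 ≤ |u 1| ∧ |u 1| ≤ (n : ℤ) := hb 1 h1n
  rw [habs] at hx0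
  -- natAbs bounds for all letters
  have hb' : ∀ j, 1 ≤ j → j ≤ n → 1 ≤ (u j).natAbs ∧ (u j).natAbs ≤ n := by
    intro j h1 h2
    have := hb j (by simp [Finset.mem_Icc]; omega)
    rw [habs] at this; omega
  have hinj' : ∀ i, 1 ≤ i → i ≤ n → ∀ j, 1 ≤ j → j ≤ n →
      (u i).natAbs = (u j).natAbs → i = j := by
    intro i hi1 hi2 j hj1 hj2 h
    refine hinj i (by simp [Finset.mem_Icc]; omega) j (by simp [Finset.mem_Icc]; omega) ?_
    rw [habs, habs]; exact_mod_cast h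
  have hside : ∀ j, 2 ≤ j → j ≤ n → u j ≠ |u 1| ∧ u j ≠ -|u 1| := by
    intro j h1 h2
    have hne : (u j).natAbs ≠ (u 1).natAbs := by
      intro h; have := hinj' j (by omega) h2 1 (by omega) (by omega) h; omega
    rw [habs]; omega
  have hvdef : ∀ i, 1 ≤ i → i ≤ n - 1 → (chi n u).2 i = renorm |u 1| (u (i + 1)) := by
    intro i hi1 hi2; simp only [chi]; rw [if_pos ⟨hi1, hi2⟩]
  have hx1 : 1 ≤ |u 1| := by rw [habs]; exact_mod_cast hx0.1
  have hx2 : |u 1| ≤ (n : ℤ) := by rw [habs]; exact_mod_cast hx0.2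
  refine ⟨by simp [chi, Finset.mem_Icc]; omega, ⟨?_, ?_, ?_⟩, ?_⟩
  · intro i hi
    simp only [Finset.mem_Icc] at hi
    rw [hvdef i hi.1 hi.2, habs]
    have hss := hside (i + 1) (by omega) (by omega)
    have hbb := hb' (i + 1) (by omega) (by omega)
    have := renorm_natAbs (n := n) hx1 hx2 hbb.1 hbb.2 hss.1 hss.2
    omega
  · intro i hi j hj h
    simp only [Finset.mem_Icc] at hi hj
    rw [hvdef i hi.1 hi.2, hvdef j hj.1 hj.2] at h
    have h' : (renorm (|u 1|) (u (i+1))).natAbs = (renorm (|u 1|) (u (j+1))).natAbs := by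
      rw [← Int.natAbs_abs (renorm (|u 1|) (u (i+1))), ← Int.natAbs_abs (renorm (|u 1|) (u (j+1))), h]
    have hsi := hside (i + 1) (by omega) (by omega)
    have hsj := hside (j + 1) (by omega) (by omega)
    have := renorm_natAbs_inj hx1 hsi.1 hsi.2 hsj.1 hsj.2 h'
    have := hinj' (i + 1) (by omega) (by omega) (j + 1) (by omega) (by omega) this
    omega
  · intro i hi
    simp only [Finset.mem_Icc] at hi
    simp only [chi]
    rw [if_neg (by omega)]
  · apply descB_split hn u _ (hz 0 (by simp)) hs
    intro i hi
    simp only [Finset.mem_Icc] at hi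
    rw [hvdef (i + 1) (by omega) (by omega), hvdef i (by omega) (by omega)]
    have hsi := hside (i + 2) (by omega) (by omega)
    have hsj := hside (i + 1) (by omega) (by omega)
    have e : i + 1 + 1 = i + 2 := by omega
    rw [e]
    refine renorm_lt_iff hx1 hsi.1 hsi.2 hsj.1 hsj.2 ?_
    intro h
    have : (u (i+2)).natAbs = (u (i+1)).natAbs := by rw [h]
    have := hinj' (i + 2) (by omega) (by omega) (i + 1) (by omega) (by omega) this
    omega

lemma chi_inj (hn : 2 ≤ n) {u' : ℕ → ℤ} (hu : IsSignedPerm n u) (hu' : IsSignedPerm n u')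
    (hs : u 1 * u 2 < 0) (hs' : u' 1 * u' 2 < 0) (h : chi n u = chi n u') : u = u' := by
  obtain ⟨hb, hinj, hz⟩ := hu
  obtain ⟨hb', hinj', hz'⟩ := hu'
  have h1 : (u 1).natAbs = (u' 1).natAbs := congrArg Prod.fst h
  have h2 : ∀ i, (chi n u).2 i = (chi n u').2 i := fun i => congrFun (congrArg Prod.snd h) i
  have habs1 : |u 1| = |u' 1| := by rw [habs, habs]; exact_mod_cast h1
  have hside : ∀ j, 2 ≤ j → j ≤ n → u j ≠ |u 1| ∧ u j ≠ -|u 1| := by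
    intro j hj1 hj2
    have hne : (u j).natAbs ≠ (u 1).natAbs := by
      intro hh
      have : |u j| = |u 1| := by rw [habs, habs]; exact_mod_cast hh
      have := hinj j (by simp [Finset.mem_Icc]; omega) 1 (by simp [Finset.mem_Icc]; omega) this
      omega
    rw [habs]; omega
  have hside' : ∀ j, 2 ≤ j → j ≤ n → u' j ≠ |u 1| ∧ u' j ≠ -|u 1| := by
    intro j hj1 hj2
    have hne : (u' j).natAbs ≠ (u' 1).natAbs := by
      intro hh
      have : |u' j| = |u' 1| := by rw [habs, habs]; exact_mod_cast hh
      have := hinj' j (by simp [Finset.mem_Icc]; omega) 1 (by simp [Finset.mem_Icc]; omega) this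
      omega
    rw [habs1, habs]; omega
  have hx1 : 1 ≤ |u 1| := by
    have := hb 1 (by simp [Finset.mem_Icc]; omega); exact this.1
  have key : ∀ j, 2 ≤ j → j ≤ n → u j = u' j := by
    intro j hj1 hj2
    have hj' := h2 (j - 1)
    simp only [chi] at hj'
    rw [if_pos (by omega : 1 ≤ j - 1 ∧ j - 1 ≤ n - 1), if_pos (by omega : 1 ≤ j - 1 ∧ j - 1 ≤ n - 1)] at hj'
    have e : j - 1 + 1 = j := by omega
    rw [e, ← habs1] at hj'
    exact renorm_inj hx1 (hside j hj1 hj2).1 (hside j hj1 hj2).2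
      (hside' j hj1 hj2).1 (hside' j hj1 hj2).2 hj'
  funext i
  by_cases hi1 : i = 1
  · subst hi1
    have h22 : u 2 = u' 2 := key 2 (by omega) hn
    rcases mul_neg_iff.mp hs with ⟨a1, a2⟩ | ⟨a1, a2⟩ <;>
      rcases mul_neg_iff.mp hs' with ⟨b1, b2⟩ | ⟨b1, b2⟩ <;> omega
  · by_cases hi2 : 2 ≤ i ∧ i ≤ n
    · exact key i hi2.1 hi2.2
    · rw [hz i (by simp [Finset.mem_Icc]; omega), hz' i (by simp [Finset.mem_Icc]; omega)]

lemma chi_surj (hn : 2 ≤ n) {xn : ℕ} {v : ℕ → ℤ} (hxn : xn ∈ Finset.Icc 1 n)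
    (hv : IsSignedPerm (n - 1) v) :
    ∃ u : ℕ → ℤ, IsSignedPerm n u ∧ u 1 * u 2 < 0 ∧ chi n u = (xn, v) := by
  obtain ⟨hb, hinj, hz⟩ := hv
  simp only [Finset.mem_Icc] at hxn
  set x : ℤ := (xn : ℤ) with hxdef
  have hx1 : 1 ≤ x := by omega
  have hx2 : x ≤ (n : ℤ) := by rw [hxdef]; exact_mod_cast hxn.2
  have hb' : ∀ j, 1 ≤ j → j ≤ n - 1 → 1 ≤ (v j).natAbs ∧ (v j).natAbs ≤ n - 1 := by
    intro j h1 h2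
    have := hb j (by simp [Finset.mem_Icc]; omega)
    rw [habs] at this; omega
  have hinjv : ∀ i, 1 ≤ i → i ≤ n - 1 → ∀ j, 1 ≤ j → j ≤ n - 1 →
      (v i).natAbs = (v j).natAbs → i = j := by
    intro i hi1 hi2 j hj1 hj2 hh
    refine hinj i (by simp [Finset.mem_Icc]; omega) j (by simp [Finset.mem_Icc]; omega) ?_
    rw [habs, habs]; exact_mod_cast hh
  set s : ℤ := if 0 < v 1 then -1 else 1 with hsdef
  set u : ℕ → ℤ := fun i =>
    if i = 1 then s * x else if 2 ≤ i ∧ i ≤ n then unrenorm x (v (i - 1)) else 0 with hudef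
  have hu1 : u 1 = s * x := by simp [hudef]
  have huj : ∀ j, 2 ≤ j → j ≤ n → u j = unrenorm x (v (j - 1)) := by
    intro j h1 h2; simp only [hudef]; rw [if_neg (by omega), if_pos ⟨h1, h2⟩]
  have hu1abs : (u 1).natAbs = xn := by
    rw [hu1, hsdef]; split_ifs <;> simp <;> omega
  have hujspec : ∀ j, 2 ≤ j → j ≤ n → 1 ≤ (u j).natAbs ∧ (u j).natAbs ≤ n ∧
      u j ≠ x ∧ u j ≠ -x ∧ (0 < v (j - 1) ↔ 0 < u j) := by
    intro j h1 h2
    rw [huj j h1 h2]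
    exact unrenorm_natAbs hx1 hx2 (hb' (j-1) (by omega) (by omega)).1
      (hb' (j-1) (by omega) (by omega)).2
  have huabs1 : |u 1| = x := by rw [habs, hu1abs]
  have hsp : IsSignedPerm n u := by
    refine ⟨?_, ?_, ?_⟩
    · intro i hi
      simp only [Finset.mem_Icc] at hi
      rw [habs]
      by_cases h1 : i = 1
      · subst h1; omega
      · have := hujspec i (by omega) hi.2; omega
    · intro i hi j hj hh
      simp only [Finset.mem_Icc] at hi hj
      rw [habs, habs] at hh
      have hh' : (u i).natAbs = (u j).natAbs := by exact_mod_cast hh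
      by_cases h1 : i = 1 <;> by_cases h2 : j = 1
      · omega
      · exfalso; subst h1
        have := hujspec j (by omega) hj.2
        rw [hu1abs] at hh'; omega
      · exfalso; subst h2
        have := hujspec i (by omega) hi.2
        rw [hu1abs] at hh'; omega
      · rw [huj i (by omega) hi.2, huj j (by omega) hj.2] at hh'
        have := unrenorm_natAbs_inj hx1 hh'
        have := hinjv (i - 1) (by omega) (by omega) (j - 1) (by omega) (by omega) this
        omega
    · intro i hi
      simp only [Finset.mem_Icc] at hi
      simp only [hudef]
      rw [if_neg (by omega), if_neg (by omega)]
  have hv1 := hb' 1 (by omega) (by omega)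
  have hu2 := hujspec 2 (by omega) hn
  have hprod : u 1 * u 2 < 0 := by
    rw [hu1]
    rcases (by omega : 0 < v 1 ∨ v 1 < 0) with hpos | hneg
    · have hs1 : s = -1 := by rw [hsdef, if_pos hpos]
      have : 0 < u 2 := (hu2.2.2.2.2).mp (by norm_num; exact hpos)
      rw [hs1]; nlinarith
    · have hs1 : s = 1 := by rw [hsdef, if_neg (by omega)]
      have : u 2 < 0 := by
        have := hu2.2.2.2.2
        have h21 : (2:ℕ) - 1 = 1 := by omega
        rw [h21] at this
        omega
      rw [hs1]; nlinarith
  refine ⟨u, hsp, hprod, ?_⟩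
  have : (chi n u).2 = v := by
    funext i
    simp only [chi]
    by_cases hi : 1 ≤ i ∧ i ≤ n - 1
    · rw [if_pos hi, huabs1, huj (i + 1) (by omega) (by omega)]
      have e : i + 1 - 1 = i := by omega
      rw [e, renorm_unrenorm hx1]
    · rw [if_neg hi]
      exact (hz i (by simp [Finset.mem_Icc]; omega)).symm
  rw [Prod.ext_iff]
  exact ⟨by simpa [chi] using hu1abs, this⟩

end chispec



/-! ### rank and its inverse -/

def rank (V : Finset ℤ) (y : ℤ) : ℕ := (V.filter (fun z => z ≤ y)).card

lemma rank_le_rank (V : Finset ℤ) {y y' : ℤ} (h : y ≤ y') : rank V y ≤ rank V y' := by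
  apply Finset.card_le_card
  intro z hz
  simp only [Finset.mem_filter] at hz ⊢
  exact ⟨hz.1, le_trans hz.2 h⟩

lemma rank_lt_rank {V : Finset ℤ} {y y' : ℤ} (hy' : y' ∈ V) (h : y < y') :
    rank V y < rank V y' := by
  apply Finset.card_lt_card
  constructor
  · intro z hz
    simp only [Finset.mem_filter] at hz ⊢
    exact ⟨hz.1, le_trans hz.2 (le_of_lt h)⟩
  · intro hsub
    have := hsub (Finset.mem_filter.mpr ⟨hy', le_refl _⟩)
    simp only [Finset.mem_filter] at this
    omega

lemma rank_lt_iff {V : Finset ℤ} {y y' : ℤ} (hy : y ∈ V) (hy' : y' ∈ V) :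
    rank V y < rank V y' ↔ y < y' := by
  constructor
  · intro h
    by_contra hc
    push_neg at hc
    have := rank_le_rank V hc
    omega
  · exact rank_lt_rank hy'

lemma rank_injOn {V : Finset ℤ} {y y' : ℤ} (hy : y ∈ V) (hy' : y' ∈ V)
    (h : rank V y = rank V y') : y = y' := by
  rcases lt_trichotomy y y' with hc | hc | hc
  · have := rank_lt_rank hy' hc; omega
  · exact hc
  · have := rank_lt_rank hy hc; omega

lemma one_le_rank {V : Finset ℤ} {y : ℤ} (hy : y ∈ V) : 1 ≤ rank V y := by
  rw [Nat.one_le_iff_ne_zero, ← Nat.pos_iff_ne_zero, rank, Finset.card_pos]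
  exact ⟨y, Finset.mem_filter.mpr ⟨hy, le_refl _⟩⟩

lemma rank_le_cardV {V : Finset ℤ} {y : ℤ} : rank V y ≤ V.card :=
  Finset.card_le_card (Finset.filter_subset _ _)

lemma rank_exists {V : Finset ℤ} {r : ℕ} (hr1 : 1 ≤ r) (hr2 : r ≤ V.card) :
    ∃ y ∈ V, rank V y = r := by
  have himg : V.image (rank V) = Finset.Icc 1 V.card := by
    apply Finset.eq_of_subset_of_card_le
    · intro a ha
      simp only [Finset.mem_image] at ha
      obtain ⟨y, hy, rfl⟩ := ha
      simp only [Finset.mem_Icc]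
      exact ⟨one_le_rank hy, rank_le_cardV⟩
    · rw [Finset.card_image_of_injOn (fun a ha b hb h => rank_injOn ha hb h), Nat.card_Icc]
      omega
  have : r ∈ V.image (rank V) := by rw [himg]; simp only [Finset.mem_Icc]; omega
  simpa only [Finset.mem_image] using this

noncomputable def invRank (V : Finset ℤ) (r : ℕ) : ℤ :=
  if h : ∃ y ∈ V, rank V y = r then h.choose else 0

lemma invRank_spec {V : Finset ℤ} {r : ℕ} (hr1 : 1 ≤ r) (hr2 : r ≤ V.card) :
    invRank V r ∈ V ∧ rank V (invRank V r) = r := by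
  have h := rank_exists hr1 hr2
  rw [invRank, dif_pos h]
  exact ⟨h.choose_spec.1, h.choose_spec.2⟩

lemma invRank_rank {V : Finset ℤ} {y : ℤ} (hy : y ∈ V) : invRank V (rank V y) = y := by
  have h : ∃ z ∈ V, rank V z = rank V y := ⟨y, hy, rfl⟩
  rw [invRank, dif_pos h]
  exact rank_injOn h.choose_spec.1 hy h.choose_spec.2

lemma invRank_lt_iff {V : Finset ℤ} {r r' : ℕ} (h1 : 1 ≤ r) (h2 : r ≤ V.card)
    (h3 : 1 ≤ r') (h4 : r' ≤ V.card) : invRank V r < invRank V r' ↔ r < r' := by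
  obtain ⟨hm, he⟩ := invRank_spec h1 h2
  obtain ⟨hm', he'⟩ := invRank_spec h3 h4
  rw [← he, ← he', rank_lt_iff hm hm', he, he']

/-! ### signed permutation helpers -/

lemma sp_natAbs_image {m : ℕ} {v : ℕ → ℤ} (hv : IsSignedPerm m v) :
    (Finset.Icc 1 m).image (fun i => (v i).natAbs) = Finset.Icc 1 m := by
  apply Finset.eq_of_subset_of_card_le
  · intro a ha
    simp only [Finset.mem_image] at ha
    obtain ⟨i, hi, rfl⟩ := ha
    have := hv.1 i hi
    rw [habs] at this
    simp only [Finset.mem_Icc]; omega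
  · rw [Finset.card_image_of_injOn]
    intro i hi j hj h
    simp only [Finset.coe_Icc, Set.mem_Icc] at hi hj
    refine hv.2.1 i (by simp [Finset.mem_Icc]; omega) j (by simp [Finset.mem_Icc]; omega) ?_
    rw [habs, habs]; exact_mod_cast h

lemma sp_natAbs_surj {m : ℕ} {v : ℕ → ℤ} (hv : IsSignedPerm m v) {r : ℕ}
    (hr : r ∈ Finset.Icc 1 m) : ∃ i ∈ Finset.Icc 1 m, (v i).natAbs = r := by
  rw [← sp_natAbs_image hv] at hr
  simpa only [Finset.mem_image] using hr

lemma sp_injOn {m : ℕ} {v : ℕ → ℤ} (hv : IsSignedPerm m v) :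
    Set.InjOn v (Finset.Icc 1 m) := by
  intro i hi j hj h
  simp only [Finset.coe_Icc, Set.mem_Icc] at hi hj
  exact hv.2.1 i (by simp [Finset.mem_Icc]; omega) j (by simp [Finset.mem_Icc]; omega) (by rw [h])

lemma sp_image_card {m : ℕ} {v : ℕ → ℤ} (hv : IsSignedPerm m v) :
    ((Finset.Icc 1 m).image v).card = m := by
  rw [Finset.card_image_of_injOn (sp_injOn hv), Nat.card_Icc]
  omega

/-- rank within the value set equals position-count. -/
lemma rank_eq_poscount {m : ℕ} {v : ℕ → ℤ} (hv : IsSignedPerm m v) (i : ℕ) :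
    rank ((Finset.Icc 1 m).image v) (v i)
      = ((Finset.Icc 1 m).filter (fun j => v j ≤ v i)).card := by
  rw [rank, Finset.filter_image]
  apply Finset.card_image_of_injOn
  apply Set.InjOn.mono _ (sp_injOn hv)
  intro z hz
  simp only [Finset.coe_filter, Set.mem_setOf_eq] at hz
  simp only [Finset.coe_Icc, Set.mem_Icc]
  exact Finset.mem_Icc.mp hz.1

/-! ### the value set attached to a sign choice -/

def VT (m : ℕ) (T : Finset ℕ) : Finset ℤ :=
  T.image (fun a : ℕ => -(a : ℤ)) ∪ ((Finset.Icc 1 m \ T).image (fun a : ℕ => (a : ℤ)))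

lemma mem_VT {m : ℕ} {T : Finset ℕ} {y : ℤ} :
    y ∈ VT m T ↔ (∃ a ∈ T, -(a : ℤ) = y) ∨ (∃ a ∈ Finset.Icc 1 m \ T, (a : ℤ) = y) := by
  simp [VT]

lemma VT_card {m : ℕ} {T : Finset ℕ} (hT : T ⊆ Finset.Icc 1 m) : (VT m T).card = m := by
  have hd : Disjoint (T.image (fun a : ℕ => -(a : ℤ)))
      ((Finset.Icc 1 m \ T).image (fun a : ℕ => (a : ℤ))) := by
    rw [Finset.disjoint_left]
    intro y hy hy'
    simp only [Finset.mem_image] at hy hy'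
    obtain ⟨a, ha, rfl⟩ := hy
    obtain ⟨b, hb, hba⟩ := hy'
    have ha1 : 1 ≤ a := (Finset.mem_Icc.mp (hT ha)).1
    have hb1 : 1 ≤ b := (Finset.mem_Icc.mp (Finset.mem_sdiff.mp hb).1).1
    omega
  rw [VT, Finset.card_union_of_disjoint hd,
    Finset.card_image_of_injOn (by intro a _ b _ h; simp only [neg_inj] at h; exact_mod_cast h),
    Finset.card_image_of_injOn (by intro a _ b _ h; simp only [] at h; exact_mod_cast h),
    Finset.card_sdiff_of_subset hT, Nat.card_Icc]
  have := Finset.card_le_card hT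
  rw [Nat.card_Icc] at this
  omega

lemma VT_mem_spec {m : ℕ} {T : Finset ℕ} (hT : T ⊆ Finset.Icc 1 m) {y : ℤ}
    (hy : y ∈ VT m T) :
    1 ≤ y.natAbs ∧ y.natAbs ≤ m ∧ (y < 0 ↔ y.natAbs ∈ T) := by
  rcases mem_VT.mp hy with ⟨a, ha, rfl⟩ | ⟨a, ha, rfl⟩
  · have := Finset.mem_Icc.mp (hT ha)
    have he : (-(a:ℤ)).natAbs = a := by omega
    rw [he]
    refine ⟨by omega, by omega, by constructor <;> intro _ <;> [exact ha; omega]⟩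
  · rw [Finset.mem_sdiff, Finset.mem_Icc] at ha
    have he : ((a:ℤ)).natAbs = a := by omega
    rw [he]
    refine ⟨by omega, by omega, by constructor <;> intro h <;> [omega; exact absurd h ha.2]⟩

lemma VT_natAbs_inj {m : ℕ} {T : Finset ℕ} (hT : T ⊆ Finset.Icc 1 m) {y y' : ℤ}
    (hy : y ∈ VT m T) (hy' : y' ∈ VT m T) (h : y.natAbs = y'.natAbs) : y = y' := by
  obtain ⟨a1, a2, a3⟩ := VT_mem_spec hT hy
  obtain ⟨b1, b2, b3⟩ := VT_mem_spec hT hy'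
  rw [h] at a3
  have : y < 0 ↔ y' < 0 := a3.trans b3.symm
  omega

lemma sp_natAbs_inj {m : ℕ} {v : ℕ → ℤ} (hv : IsSignedPerm m v) :
    ∀ i ∈ Finset.Icc 1 m, ∀ j ∈ Finset.Icc 1 m, (v i).natAbs = (v j).natAbs → i = j := by
  intro i hi j hj h
  refine hv.2.1 i hi j hj ?_
  rw [habs, habs]; exact_mod_cast h

def Tv (m : ℕ) (v : ℕ → ℤ) : Finset ℕ :=
  ((Finset.Icc 1 m).filter (fun i => v i < 0)).image (fun i => (v i).natAbs)

def stdz (m : ℕ) (v : ℕ → ℤ) : ℕ → ℤ := fun i =>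
  if 1 ≤ i ∧ i ≤ m then (((Finset.Icc 1 m).filter (fun j => v j ≤ v i)).card : ℤ) else 0

noncomputable def Psi (m : ℕ) (p : Finset ℕ × (ℕ → ℤ)) : ℕ → ℤ := fun i =>
  if 1 ≤ i ∧ i ≤ m then invRank (VT m p.1) (p.2 i).natAbs else 0

lemma Tv_subset {m : ℕ} {v : ℕ → ℤ} (hv : IsSignedPerm m v) : Tv m v ⊆ Finset.Icc 1 m := by
  intro a ha
  simp only [Tv, Finset.mem_image, Finset.mem_filter] at ha
  obtain ⟨i, ⟨hi, _⟩, rfl⟩ := ha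
  have := hv.1 i hi
  rw [habs] at this
  simp only [Finset.mem_Icc]; omega

lemma VT_Tv {m : ℕ} {v : ℕ → ℤ} (hv : IsSignedPerm m v) :
    VT m (Tv m v) = (Finset.Icc 1 m).image v := by
  ext y
  constructor
  · intro hy
    rcases mem_VT.mp hy with ⟨a, ha, rfl⟩ | ⟨a, ha, rfl⟩
    · simp only [Tv, Finset.mem_image, Finset.mem_filter] at ha
      obtain ⟨i, ⟨hi, hneg⟩, rfl⟩ := ha
      simp only [Finset.mem_image]
      exact ⟨i, hi, by omega⟩
    · rw [Finset.mem_sdiff] at ha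
      obtain ⟨i, hi, hia⟩ := sp_natAbs_surj hv ha.1
      by_cases hneg : v i < 0
      · exfalso
        apply ha.2
        simp only [Tv, Finset.mem_image, Finset.mem_filter]
        exact ⟨i, ⟨hi, hneg⟩, hia⟩
      · have h1 : 1 ≤ a := (Finset.mem_Icc.mp ha.1).1
        simp only [Finset.mem_image]
        exact ⟨i, hi, by omega⟩
  · intro hy
    simp only [Finset.mem_image] at hy
    obtain ⟨i, hi, rfl⟩ := hy
    have hb := hv.1 i hi
    rw [habs] at hb
    rw [mem_VT]
    by_cases hneg : v i < 0
    · left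
      refine ⟨(v i).natAbs, ?_, by omega⟩
      simp only [Tv, Finset.mem_image, Finset.mem_filter]
      exact ⟨i, ⟨hi, hneg⟩, rfl⟩
    · right
      refine ⟨(v i).natAbs, ?_, by omega⟩
      rw [Finset.mem_sdiff]
      constructor
      · simp only [Finset.mem_Icc]; omega
      · intro hmem
        simp only [Tv, Finset.mem_image, Finset.mem_filter] at hmem
        obtain ⟨j, ⟨hj, hjneg⟩, hja⟩ := hmem
        have := sp_natAbs_inj hv j hj i hi hja
        subst this
        omega

lemma Phi_spec {m : ℕ} {v : ℕ → ℤ} (hv : IsSignedPerm m v) :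
    IsPermWord m (stdz m v) ∧ descA m (stdz m v) = descA m v ∧
      Psi m (Tv m v, stdz m v) = v := by
  set V := (Finset.Icc 1 m).image v with hVdef
  have hVT : VT m (Tv m v) = V := VT_Tv hv
  have hmem : ∀ i, i ∈ Finset.Icc 1 m → v i ∈ V := fun i hi =>
    Finset.mem_image.mpr ⟨i, hi, rfl⟩
  have hcard : V.card = m := sp_image_card hv
  have hstd : ∀ i, 1 ≤ i → i ≤ m → stdz m v i = (rank V (v i) : ℤ) := by
    intro i h1 h2
    rw [stdz, if_pos ⟨h1, h2⟩, rank_eq_poscount hv i]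
  have hrb : ∀ i, 1 ≤ i → i ≤ m → 1 ≤ rank V (v i) ∧ rank V (v i) ≤ m := by
    intro i h1 h2
    have := one_le_rank (hmem i (Finset.mem_Icc.mpr ⟨h1, h2⟩))
    have := rank_le_cardV (V := V) (y := v i)
    omega
  have hsp : IsSignedPerm m (stdz m v) := by
    refine ⟨?_, ?_, ?_⟩
    · intro i hi
      simp only [Finset.mem_Icc] at hi
      rw [hstd i hi.1 hi.2, habs]
      have := hrb i hi.1 hi.2
      omega
    · intro i hi j hj h
      simp only [Finset.mem_Icc] at hi hj
      rw [hstd i hi.1 hi.2, hstd j hj.1 hj.2] at h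
      have hr : rank V (v i) = rank V (v j) := by
        rw [abs_of_nonneg (by positivity), abs_of_nonneg (by positivity)] at h
        exact_mod_cast h
      have := rank_injOn (hmem i (by simp [Finset.mem_Icc]; omega))
        (hmem j (by simp [Finset.mem_Icc]; omega)) hr
      exact hv.2.1 i (by simp [Finset.mem_Icc]; omega) j (by simp [Finset.mem_Icc]; omega)
        (by rw [this])
    · intro i hi
      simp only [Finset.mem_Icc] at hi
      rw [stdz, if_neg (by omega)]
  refine ⟨⟨hsp, ?_⟩, ?_, ?_⟩
  · intro i hi
    simp only [Finset.mem_Icc] at hi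
    rw [hstd i hi.1 hi.2]
    have := hrb i hi.1 hi.2
    omega
  · unfold descA
    congr 1
    apply Finset.filter_congr
    intro i hi
    simp only [Finset.mem_Icc] at hi
    rw [hstd (i+1) (by omega) (by omega), hstd i (by omega) (by omega)]
    simp only [Nat.cast_lt]
    rw [rank_lt_iff (hmem (i+1) (by simp [Finset.mem_Icc]; omega))
      (hmem i (by simp [Finset.mem_Icc]; omega))]
  · funext i
    by_cases hi : 1 ≤ i ∧ i ≤ m
    · have : Psi m (Tv m v, stdz m v) i = invRank (VT m (Tv m v)) ((stdz m v i).natAbs) := by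
        rw [Psi, if_pos hi]
      rw [this, hVT, hstd i hi.1 hi.2]
      have he : ((rank V (v i) : ℤ)).natAbs = rank V (v i) := by omega
      rw [he, invRank_rank (hmem i (Finset.mem_Icc.mpr hi))]
    · rw [Psi, if_neg hi]
      exact (hv.2.2 i (by simp [Finset.mem_Icc]; omega)).symm

lemma Psi_spec {m : ℕ} {T : Finset ℕ} {w : ℕ → ℤ} (hT : T ⊆ Finset.Icc 1 m)
    (hw : IsPermWord m w) :
    IsSignedPerm m (Psi m (T, w)) ∧ descA m (Psi m (T, w)) = descA m w ∧
      Tv m (Psi m (T, w)) = T ∧ stdz m (Psi m (T, w)) = w := by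
  set V := VT m T with hVdef
  set u := Psi m (T, w) with hudef
  have hc : V.card = m := VT_card hT
  have hwb : ∀ i, 1 ≤ i → i ≤ m → 1 ≤ (w i).natAbs ∧ (w i).natAbs ≤ m ∧ 0 < w i := by
    intro i h1 h2
    have h3 := hw.1.1 i (by simp [Finset.mem_Icc]; omega)
    have h4 := hw.2 i (by simp [Finset.mem_Icc]; omega)
    rw [habs] at h3
    omega
  have hu : ∀ i, 1 ≤ i → i ≤ m → u i ∈ V ∧ rank V (u i) = (w i).natAbs := by
    intro i h1 h2
    have hwi := hwb i h1 h2
    have := invRank_spec (V := V) (r := (w i).natAbs) (by omega) (by omega)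
    have he : u i = invRank V ((w i).natAbs) := by rw [hudef, Psi, if_pos ⟨h1, h2⟩]
    rw [he]
    exact this
  have hsp : IsSignedPerm m u := by
    refine ⟨?_, ?_, ?_⟩
    · intro i hi
      simp only [Finset.mem_Icc] at hi
      have := VT_mem_spec hT (hu i hi.1 hi.2).1
      rw [habs]; omega
    · intro i hi j hj h
      simp only [Finset.mem_Icc] at hi hj
      have h' : (u i).natAbs = (u j).natAbs := by
        have := congrArg Int.natAbs h; simpa [Int.natAbs_abs] using this
      have := VT_natAbs_inj hT (hu i hi.1 hi.2).1 (hu j hj.1 hj.2).1 h'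
      have hr : (w i).natAbs = (w j).natAbs := by
        rw [← (hu i hi.1 hi.2).2, ← (hu j hj.1 hj.2).2, this]
      exact sp_natAbs_inj hw.1 i (by simp [Finset.mem_Icc]; omega)
        j (by simp [Finset.mem_Icc]; omega) hr
    · intro i hi
      simp only [Finset.mem_Icc] at hi
      rw [hudef, Psi, if_neg (by omega)]
  have himg : (Finset.Icc 1 m).image u = V := by
    apply Finset.eq_of_subset_of_card_le
    · intro y hy
      simp only [Finset.mem_image] at hy
      obtain ⟨i, hi, rfl⟩ := hy
      simp only [Finset.mem_Icc] at hi
      exact (hu i hi.1 hi.2).1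
    · rw [sp_image_card hsp, hc]
  refine ⟨hsp, ?_, ?_, ?_⟩
  · unfold descA
    congr 1
    apply Finset.filter_congr
    intro i hi
    simp only [Finset.mem_Icc] at hi
    have h1 := hu (i+1) (by omega) (by omega)
    have h2 := hu i (by omega) (by omega)
    have hw1 := hwb (i+1) (by omega) (by omega)
    have hw2 := hwb i (by omega) (by omega)
    rw [← rank_lt_iff h1.1 h2.1, h1.2, h2.2]
    omega
  · ext a
    constructor
    · intro ha
      simp only [Tv, Finset.mem_image, Finset.mem_filter, Finset.mem_Icc] at ha
      obtain ⟨i, ⟨hi, hneg⟩, rfl⟩ := ha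
      have := VT_mem_spec hT (hu i hi.1 hi.2).1
      exact this.2.2.mp hneg
    · intro ha
      have ha1 : 1 ≤ a := (Finset.mem_Icc.mp (hT ha)).1
      have hyV : -(a : ℤ) ∈ V := by
        rw [hVdef, mem_VT]; exact Or.inl ⟨a, ha, rfl⟩
      have hr1 := one_le_rank hyV
      have hr2 := rank_le_cardV (V := V) (y := -(a : ℤ))
      obtain ⟨i, hi, hia⟩ := sp_natAbs_surj hw.1
        (by simp only [Finset.mem_Icc]; omega : rank V (-(a:ℤ)) ∈ Finset.Icc 1 m)
      simp only [Finset.mem_Icc] at hi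
      have he : u i = invRank V ((w i).natAbs) := by rw [hudef, Psi, if_pos hi]
      have hui : u i = -(a : ℤ) := by
        rw [he, hia, invRank_rank hyV]
      simp only [Tv, Finset.mem_image, Finset.mem_filter, Finset.mem_Icc]
      exact ⟨i, ⟨hi, by omega⟩, by omega⟩
  · funext i
    by_cases hi : 1 ≤ i ∧ i ≤ m
    · have : stdz m u i = (rank ((Finset.Icc 1 m).image u) (u i) : ℤ) := by
        rw [stdz, if_pos hi, rank_eq_poscount hsp i]
      rw [this, himg, (hu i hi.1 hi.2).2]
      have := hwb i hi.1 hi.2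
      omega
    · rw [stdz, if_neg hi]
      exact (hw.1.2.2 i (by simp [Finset.mem_Icc]; omega)).symm



lemma sp_finite (m : ℕ) : {v : ℕ → ℤ | IsSignedPerm m v}.Finite := by
  have h : Set.InjOn (fun (v : ℕ → ℤ) (i : Fin m) => v (i.1 + 1))
      {v : ℕ → ℤ | IsSignedPerm m v} := by
    intro v hv v' hv' h
    funext i
    by_cases hi : 1 ≤ i ∧ i ≤ m
    · have h2 := congrFun h (⟨i - 1, by omega⟩ : Fin m)
      simp only at h2
      have e : i - 1 + 1 = i := by omega
      rwa [e] at h2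
    · rw [hv.2.2 i (by simp [Finset.mem_Icc]; omega), hv'.2.2 i (by simp [Finset.mem_Icc]; omega)]
  apply Set.Finite.of_finite_image _ h
  apply Set.Finite.subset (Set.Finite.pi (fun _ : Fin m => Set.finite_Icc (-(m:ℤ)) (m:ℤ)))
  rintro f ⟨v, hv, rfl⟩
  intro i _
  have := hv.1 (i.1 + 1) (by simp [Finset.mem_Icc])
  rw [habs] at this
  simp only [Set.mem_Icc]
  omega

lemma ncard_prod {α β : Type*} {s : Set α} {t : Set β} (hs : s.Finite) (ht : t.Finite) :
    (s ×ˢ t).ncard = s.ncard * t.ncard := by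
  rw [Set.ncard_eq_toFinset_card _ (hs.prod ht), ← Set.Finite.toFinset_prod hs ht,
    Finset.card_product, ← Set.ncard_eq_toFinset_card _ hs, ← Set.ncard_eq_toFinset_card _ ht]


/-- For `n ≥ 2` and `k ≥ 1`, `χ` restricts to a bijection from the non-smooth signed
permutations of `{1,...,n}` with `k` type B descents to the pairs `(x, v)` with
`x ∈ {1,...,n}` and `v` a signed permutation of `{1,...,n−1}` with `k−1` strictly positive
descents; consequently the number of such non-smooth signed permutations is
`n·2^{n−1}·A(n−1,k−1)`. -/
theorem chi_bijOn_descB (n k : ℕ) (hn : 2 ≤ n) (hk : 1 ≤ k) :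
    Set.BijOn (chi n)
      {u : ℕ → ℤ | IsSignedPerm n u ∧ u 1 * u 2 < 0 ∧ descB n u = k}
      {p : ℕ × (ℕ → ℤ) | p.1 ∈ Finset.Icc 1 n ∧ IsSignedPerm (n - 1) p.2 ∧
        descA (n - 1) p.2 = k - 1} ∧
    {u : ℕ → ℤ | IsSignedPerm n u ∧ u 1 * u 2 < 0 ∧ descB n u = k}.ncard =
      n * 2 ^ (n - 1) * eulA (n - 1) (k - 1) := by
  have hmaps : Set.MapsTo (chi n)
      {u : ℕ → ℤ | IsSignedPerm n u ∧ u 1 * u 2 < 0 ∧ descB n u = k}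
      {p : ℕ × (ℕ → ℤ) | p.1 ∈ Finset.Icc 1 n ∧ IsSignedPerm (n - 1) p.2 ∧
        descA (n - 1) p.2 = k - 1} := by
    rintro u ⟨h1, h2, h3⟩
    obtain ⟨c1, c2, c3⟩ := chi_spec hn h1 h2
    exact ⟨c1, c2, by omega⟩
  have hinj : Set.InjOn (chi n)
      {u : ℕ → ℤ | IsSignedPerm n u ∧ u 1 * u 2 < 0 ∧ descB n u = k} :=
    fun u hu u' hu' h => chi_inj hn hu.1 hu'.1 hu.2.1 hu'.2.1 h
  have hsurj : Set.SurjOn (chi n)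
      {u : ℕ → ℤ | IsSignedPerm n u ∧ u 1 * u 2 < 0 ∧ descB n u = k}
      {p : ℕ × (ℕ → ℤ) | p.1 ∈ Finset.Icc 1 n ∧ IsSignedPerm (n - 1) p.2 ∧
        descA (n - 1) p.2 = k - 1} := by
    rintro ⟨x, v⟩ ⟨hp1, hp2, hp3⟩
    obtain ⟨u, hu1, hu2, hu3⟩ := chi_surj hn hp1 hp2
    obtain ⟨c1, c2, c3⟩ := chi_spec hn hu1 hu2
    refine ⟨u, ⟨hu1, hu2, ?_⟩, hu3⟩
    have hv2 : (chi n u).2 = v := by rw [hu3]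
    rw [c3, hv2]
    simp only [Set.mem_setOf_eq] at hp3
    rw [hp3]
    omega
  have hbij : Set.BijOn (chi n)
      {u : ℕ → ℤ | IsSignedPerm n u ∧ u 1 * u 2 < 0 ∧ descB n u = k}
      {p : ℕ × (ℕ → ℤ) | p.1 ∈ Finset.Icc 1 n ∧ IsSignedPerm (n - 1) p.2 ∧
        descA (n - 1) p.2 = k - 1} := ⟨hmaps, hinj, hsurj⟩
  refine ⟨hbij, ?_⟩
  have hWfin : {w : ℕ → ℤ | IsPermWord (n-1) w ∧ descA (n-1) w = k - 1}.Finite :=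
    (sp_finite (n-1)).subset (fun w hw => hw.1.1)
  have hSfin : {v : ℕ → ℤ | IsSignedPerm (n-1) v ∧ descA (n-1) v = k - 1}.Finite :=
    (sp_finite (n-1)).subset (fun v hv => hv.1)
  have hPsi : Set.BijOn (Psi (n-1))
      ((((Finset.Icc 1 (n-1)).powerset : Finset (Finset ℕ)) : Set (Finset ℕ)) ×ˢ
        {w : ℕ → ℤ | IsPermWord (n-1) w ∧ descA (n-1) w = k - 1})
      {v : ℕ → ℤ | IsSignedPerm (n-1) v ∧ descA (n-1) v = k - 1} := by
    refine ⟨?_, ?_, ?_⟩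
    · rintro ⟨T, w⟩ ⟨hT, hw⟩
      simp only [Finset.mem_coe, Finset.mem_powerset] at hT
      obtain ⟨s1, s2, _, _⟩ := Psi_spec (T := T) (w := w) hT hw.1
      exact ⟨s1, by rw [s2]; exact hw.2⟩
    · rintro ⟨T, w⟩ ⟨hT, hw⟩ ⟨T', w'⟩ ⟨hT', hw'⟩ heq
      simp only [Finset.mem_coe, Finset.mem_powerset] at hT hT'
      obtain ⟨_, _, t1, t2⟩ := Psi_spec (T := T) (w := w) hT hw.1
      obtain ⟨_, _, t1', t2'⟩ := Psi_spec (T := T') (w := w') hT' hw'.1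
      have hTe : T = T' := by rw [← t1, heq, t1']
      have hwe : w = w' := by rw [← t2, heq, t2']
      rw [Prod.mk.injEq]
      exact ⟨hTe, hwe⟩
    · intro v hv
      obtain ⟨p1, p2, p3⟩ := Phi_spec hv.1
      refine ⟨(Tv (n-1) v, stdz (n-1) v), ⟨?_, ?_⟩, p3⟩
      · simp only [Finset.mem_coe, Finset.mem_powerset]
        exact Tv_subset hv.1
      · exact ⟨p1, by rw [p2]; exact hv.2⟩
  have e1 : {u : ℕ → ℤ | IsSignedPerm n u ∧ u 1 * u 2 < 0 ∧ descB n u = k}.ncard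
      = {p : ℕ × (ℕ → ℤ) | p.1 ∈ Finset.Icc 1 n ∧ IsSignedPerm (n - 1) p.2 ∧
        descA (n - 1) p.2 = k - 1}.ncard := by
    rw [← hbij.image_eq, Set.ncard_image_of_injOn hinj]
  have e2 : {p : ℕ × (ℕ → ℤ) | p.1 ∈ Finset.Icc 1 n ∧ IsSignedPerm (n - 1) p.2 ∧
        descA (n - 1) p.2 = k - 1}
      = ((Finset.Icc 1 n : Finset ℕ) : Set ℕ) ×ˢ
        {v : ℕ → ℤ | IsSignedPerm (n-1) v ∧ descA (n-1) v = k - 1} := rfl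
  have e3 : {v : ℕ → ℤ | IsSignedPerm (n-1) v ∧ descA (n-1) v = k - 1}.ncard
      = 2 ^ (n-1) * eulA (n-1) (k-1) := by
    rw [← hPsi.image_eq, Set.ncard_image_of_injOn hPsi.2.1,
      ncard_prod (Finset.finite_toSet _) hWfin, Set.ncard_coe_finset,
      Finset.card_powerset, Nat.card_Icc]
    rfl
  rw [e1, e2, ncard_prod (Finset.finite_toSet _) hSfin, Set.ncard_coe_finset, Nat.card_Icc, e3,
    Nat.add_sub_cancel, mul_assoc]
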